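/- arXiv:1702.06684 — 2 statements merged into one kernel-verified Lean document; each statement's English description precedes it below -/
import Mathlib

section
/- If w = 2v is a word over {1,2} (i.e., w is v with a 2 prepended), then f_w = (r(v)+1)·f_v, where r(v) is the sum of the letters of v. -/
/-- The list of words covered by `w` in the Young-Fibonacci lattice. -/
def preds : List ℕ → List (List ℕ)
  | [] => []
  | 1 :: t => [t]
  | 2 :: t => (1 :: t) :: (preds t).map (fun u => 2 :: u)
  | _ :: _ => []

theorem preds_sum_lt : ∀ (w u : List ℕ), u ∈ preds w → u.sum < w.sum := by
  intro w
  induction w using preds.induct with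
  | case1 => intro u h; simp [preds] at h
  | case2 t => intro u h; simp [preds] at h; subst h; simp
  | case3 t ih =>
      intro u h
      simp [preds] at h
      rcases h with h | ⟨v, hv, rfl⟩
      · subst h; simp
      · have := ih v hv; simpa using by omega
  | case4 x t h1 h2 => intro u h; simp [preds] at h

/-- The number of saturated chains from the empty word to `w`. -/
def f (w : List ℕ) : ℕ :=
  if w = [] then 1
  else ((preds w).attach.map (fun u => f u.1)).sum
termination_by w.sum
decreasing_by exact preds_sum_lt w u.1 u.2

/-- The product formula. -/
def fprod (w : List ℕ) : ℕ :=
  ∏ i ∈ Finset.univ.filter (fun i : Fin w.length => w.get i = 2), ((w.drop i.1).sum - 1)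

/-! Expanding `f (2 :: v)` once gives `f (1 :: v) = f v` plus the terms `f (2 :: u)` for the words
`u` covered by `v`. Each such `u` has letter sum `r(v) - 1`, so by induction on `r` these terms are
`r(v) · f u`, and they sum to `r(v) · f v`. -/

theorem sum_add_one_of_mem_preds {w u : List ℕ} (h : u ∈ preds w) : u.sum + 1 = w.sum := by
  induction w using preds.induct generalizing u with
  | case1 => simp [preds] at h
  | case2 t =>
    rw [preds, List.mem_singleton] at h
    rw [h, List.sum_cons, add_comm]
  | case3 t ih =>
    simp only [preds, List.mem_cons, List.mem_map] at h
    rcases h with rfl | ⟨v, hv, rfl⟩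
    · simp only [List.sum_cons]; omega
    · simp only [List.sum_cons, ← ih hv]; omega
  | case4 => simp [preds] at h

theorem f_eq_sum_preds {w : List ℕ} (hw : w ≠ []) : f w = ((preds w).map f).sum := by
  rw [f]; simp [hw]

theorem f_one_cons (t : List ℕ) : f (1 :: t) = f t := by
  simp [f_eq_sum_preds, preds]

theorem f_two_cons_eq_add_sum (t : List ℕ) :
    f (2 :: t) = f (1 :: t) + ((preds t).map fun u => f (2 :: u)).sum := by
  rw [f_eq_sum_preds (List.cons_ne_nil _ _), preds, List.map_cons, List.sum_cons, List.map_map]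
  rfl

/-- `f (2 :: v) = (r(v)+1) * f v`. -/
theorem f_two_cons (v : List ℕ) :
    f (2 :: v) = (v.sum + 1) * f v := by
  have cover : ∀ u ∈ preds v, f (2 :: u) = v.sum * f u := fun u hu => by
    rw [f_two_cons u, sum_add_one_of_mem_preds hu]
  rw [f_two_cons_eq_add_sum, f_one_cons, List.map_congr_left cover, List.sum_map_mul_left]
  rcases eq_or_ne v [] with rfl | hv
  · simp [preds]
  · rw [← f_eq_sum_preds hv]; ring
termination_by v.sum
decreasing_by exact preds_sum_lt v u hu
end

section
/- Let k ≥ 1 and suppose that for some n, the residues modulo 2^k of the multiset {f_w : w a word over {1,2} of rank n with f_w odd} are equidistributed among the odd residue classes mod 2^k. Then the same holds for rank n+1. -/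
theorem fprod_cons (x : ℕ) (t : List ℕ) :
    fprod (x :: t) = (if x = 2 then x + t.sum - 1 else 1) * fprod t := by
  unfold fprod
  rw [Finset.prod_filter, Finset.prod_filter]
  exact Fin.prod_univ_succ (n := t.length) _

theorem fprod_one_cons (t : List ℕ) : fprod (1 :: t) = fprod t := by
  simp [fprod_cons]

theorem fprod_two_cons (t : List ℕ) : fprod (2 :: t) = (t.sum + 1) * fprod t := by
  rw [fprod_cons, if_pos rfl]
  congr 1
  omega

theorem Nat.odd_of_odd_mod_two_pow {m k : ℕ} (h : Odd (m % 2 ^ k)) : Odd m := by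
  cases k with
  | zero => simp [Nat.mod_one] at h
  | succ k =>
    rwa [Nat.odd_iff, Nat.mod_mod_of_dvd m (dvd_pow_self 2 k.succ_ne_zero), ← Nat.odd_iff] at h

theorem Nat.exists_mul_mod_eq_iff_mod_eq {N a i : ℕ} (ha : a.Coprime N) (hi : i.Coprime N)
    (hiN : i < N) : ∃ j, j.Coprime N ∧ j < N ∧ ∀ x, a * x % N = i ↔ x % N = j := by
  have : NeZero N := ⟨by omega⟩
  set u := ZMod.unitOfCoprime a ha
  set v : (ZMod N)ˣ := u⁻¹ * ZMod.unitOfCoprime i hi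
  refine ⟨(v : ZMod N).val, ZMod.val_coe_unit_coprime v, ZMod.val_lt _, fun x => ?_⟩
  rw [← Nat.mod_eq_of_lt hiN, ← Nat.mod_eq_of_lt (ZMod.val_lt (v : ZMod N)),
    ← ZMod.natCast_eq_natCast_iff', ← ZMod.natCast_eq_natCast_iff', ZMod.natCast_val,
    ZMod.cast_id, Units.val_mul, Units.eq_inv_mul_iff_mul_eq, Nat.cast_mul]
  simp [u]

def words : ℕ → Finset (List ℕ)
  | 0 => {[]}
  | 1 => {[1]}
  | n + 2 => (words (n + 1)).image (List.cons 1) ∪ (words n).image (List.cons 2)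

theorem mem_words {n : ℕ} {w : List ℕ} :
    w ∈ words n ↔ (∀ x ∈ w, x = 1 ∨ x = 2) ∧ w.sum = n := by
  induction n using words.induct generalizing w with
  | case1 | case2 =>
    rcases w with _ | ⟨x, _ | ⟨y, t⟩⟩ <;> simp [words]
    all_goals omega
  | case3 n ih1 ih0 =>
    cases w <;> simp [words, ih1, ih0]
    grind

def residueCount (k n i : ℕ) : ℕ :=
  ((words n).filter (fun w => fprod w % 2 ^ k = i)).card

theorem card_filter_fprod_mod_eq_residueCount {k n i : ℕ} {L : Finset (List ℕ)}
    (hL : ∀ w, w ∈ L ↔ (∀ x ∈ w, x = 1 ∨ x = 2) ∧ w.sum = n ∧ Odd (fprod w)) (hi : Odd i) :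
    (L.filter (fun w => fprod w % 2 ^ k = i)).card = residueCount k n i := by
  unfold residueCount
  congr 1
  ext w
  simp only [Finset.mem_filter, hL, mem_words]
  constructor
  · rintro ⟨⟨hw, hs, -⟩, hr⟩
    exact ⟨⟨hw, hs⟩, hr⟩
  · rintro ⟨⟨hw, hs⟩, hr⟩
    exact ⟨⟨hw, hs, Nat.odd_of_odd_mod_two_pow (hr ▸ hi)⟩, hr⟩

theorem residueCount_add_two (k n i : ℕ) :
    residueCount k (n + 2) i = residueCount k (n + 1) i +
      ((words n).filter (fun t => (n + 1) * fprod t % 2 ^ k = i)).card := by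
  have hdisj : Disjoint ((words (n + 1)).image (List.cons 1)) ((words n).image (List.cons 2)) := by
    simp [Finset.disjoint_left]
  unfold residueCount
  rw [words, Finset.filter_union,
    Finset.card_union_of_disjoint (Finset.disjoint_filter_filter hdisj), Finset.filter_image,
    Finset.filter_image, Finset.card_image_of_injective _ List.cons_injective,
    Finset.card_image_of_injective _ List.cons_injective]
  simp only [fprod_one_cons]
  congr 2
  refine Finset.filter_congr fun t ht => ?_
  rw [fprod_two_cons, (mem_words.1 ht).2]

theorem residueCount_succ_of_even {k n i : ℕ} (hn : Even n) (hi : Odd i) :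
    residueCount k (n + 1) i = residueCount k n i := by
  rcases n with _ | n
  · simp only [residueCount, words, Finset.filter_singleton, fprod_one_cons]
    split_ifs <;> rfl
  · rw [residueCount_add_two, add_eq_left, Finset.card_eq_zero, Finset.filter_eq_empty_iff]
    intro t _ ht
    exact Nat.not_even_iff_odd.2 (Nat.odd_of_odd_mod_two_pow (ht ▸ hi)) (hn.mul_right _)

theorem residueCount_succ_of_odd {k n i : ℕ} (hn : Odd n) (hi : Odd i) (hik : i < 2 ^ k) :
    ∃ j, Odd j ∧ j < 2 ^ k ∧
      residueCount k (n + 1) i = residueCount k n i + residueCount k n j := by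
  obtain ⟨m, rfl⟩ := Nat.exists_eq_add_one.2 hn.pos
  have hm : Even m := Nat.not_odd_iff_even.1 (Nat.odd_add_one.1 hn)
  have hk : k ≠ 0 := by
    rintro rfl
    obtain ⟨r, rfl⟩ := hi
    omega
  have hcop {a : ℕ} (ha : Odd a) : a.Coprime (2 ^ k) := (Nat.coprime_two_right.2 ha).pow_right k
  obtain ⟨j, hjcop, hjk, hmul⟩ := Nat.exists_mul_mod_eq_iff_mod_eq (hcop hn) (hcop hi) hik
  have hj : Odd j := Nat.coprime_two_right.1 (hjcop.coprime_dvd_right (dvd_pow_self 2 hk))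
  refine ⟨j, hj, hjk, ?_⟩
  rw [residueCount_add_two, residueCount_succ_of_even hm hj]
  simp only [residueCount, hmul]

theorem equidistribution_step_general (k n : ℕ) (L L' : Finset (List ℕ))
    (hL : ∀ w : List ℕ, w ∈ L ↔ (∀ x ∈ w, x = 1 ∨ x = 2) ∧ w.sum = n ∧ Odd (fprod w))
    (hL' : ∀ w : List ℕ, w ∈ L' ↔ (∀ x ∈ w, x = 1 ∨ x = 2) ∧ w.sum = n + 1 ∧ Odd (fprod w))
    (h : ∃ c : ℕ, ∀ i : ℕ, Odd i → i < 2 ^ k →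
      (L.filter (fun w => fprod w % 2 ^ k = i)).card = c) :
    ∃ c : ℕ, ∀ i : ℕ, Odd i → i < 2 ^ k →
      (L'.filter (fun w => fprod w % 2 ^ k = i)).card = c := by
  obtain ⟨c, hc⟩ := h
  have hcount {i : ℕ} (hi : Odd i) (hik : i < 2 ^ k) : residueCount k n i = c :=
    card_filter_fprod_mod_eq_residueCount hL hi ▸ hc i hi hik
  rcases Nat.even_or_odd n with hn | hn
  · refine ⟨c, fun i hi hik => ?_⟩
    rw [card_filter_fprod_mod_eq_residueCount hL' hi, residueCount_succ_of_even hn hi,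
      hcount hi hik]
  · refine ⟨c + c, fun i hi hik => ?_⟩
    obtain ⟨j, hj, hjk, hij⟩ := residueCount_succ_of_odd hn hi hik
    rw [card_filter_fprod_mod_eq_residueCount hL' hi, hij, hcount hi hik, hcount hj hjk]

/-- equidistribution of the residues mod `2^k` of the `f`-values of
odd words propagates from rank `n` to rank `n+1`. -/
theorem equidistribution_step (k n : ℕ) (hk : 1 ≤ k) (L L' : Finset (List ℕ))
    (hL : ∀ w : List ℕ, w ∈ L ↔ (∀ x ∈ w, x = 1 ∨ x = 2) ∧ w.sum = n ∧ Odd (fprod w))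
    (hL' : ∀ w : List ℕ, w ∈ L' ↔ (∀ x ∈ w, x = 1 ∨ x = 2) ∧ w.sum = n + 1 ∧ Odd (fprod w))
    (h : ∃ c : ℕ, ∀ i : ℕ, Odd i → i < 2 ^ k →
      (L.filter (fun w => fprod w % 2 ^ k = i)).card = c) :
    ∃ c : ℕ, ∀ i : ℕ, Odd i → i < 2 ^ k →
      (L'.filter (fun w => fprod w % 2 ^ k = i)).card = c :=
  equidistribution_step_general k n L L' hL hL' h
end
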